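/- For every c ≥ 0 there exists a unique continuous function f_c : [0,1] → ℝ with f_c(0) = 1/2 which is continuously differentiable on [0,1) and satisfies f_c'(r) = c·r/(f_c(r) − r/2) for r ∈ [0,1). Moreover f_c is nondecreasing, and for c > 0, f_c is twice continuously differentiable on (0,1] with f_c''(r) > 0 for all r ∈ (0,1]. -/

import Mathlib

/-!
The equation is homogeneous: writing `f(r) = r v(r)` turns it into the separable equation
`r v' = -(v - β)(v + α) / (v - 1/2)`, where `β` and `-α` are the roots of `v² - v/2 - c`.
Separating variables gives `r = R(v) := exp(-L(v) / (α + β)) / 2` with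
`L(v) = α log(v - β) + β log(v + α)`. On `(β, ∞)` the function `R` decreases from `∞` to `0` and
`v R(v) → 1/2` as `v → ∞`, so with `V = R⁻¹` the function `r V(r)`, set to `1/2` at `0`, is a
solution. Its derivative is `c / (V(r) - 1/2)`, which tends to `0` at `0` and increases because
`V` decreases.

For uniqueness, `α log(y - βr) + β log(y + αr)` is a first integral: it is constant along any
solution `y = g(r)` staying above `βr`, and it is strictly increasing in `y`. Hence a solution that
agrees with `r V(r)` at one point agrees with it just to the right, and continuous induction
concludes.
-/

open Set Filter Function Real Topology

noncomputable section

namespace HomogeneousODE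

variable {c : ℝ}

def α (c : ℝ) : ℝ := √(1/16 + c) - 1/4

def β (c : ℝ) : ℝ := α c + 1/2

lemma α_pos (hc : 0 < c) : 0 < α c := by
  have h₁ : √(1/16 : ℝ) = 1/4 := by
    rw [show (1/16 : ℝ) = (1/4)^2 by norm_num, sqrt_sq (by norm_num)]
  have h₂ := sqrt_lt_sqrt (by norm_num : (0:ℝ) ≤ 1/16) (by linarith : 1/16 < 1/16 + c)
  unfold α; linarith

lemma half_lt_β (hc : 0 < c) : 1/2 < β c := by
  have := α_pos hc; unfold β; linarith

lemma α_add_β_pos (hc : 0 < c) : 0 < α c + β c := by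
  linarith [α_pos hc, half_lt_β hc]

lemma α_mul_β (hc : 0 ≤ c) : α c * β c = c := by
  have h := sq_sqrt (by linarith : (0:ℝ) ≤ 1/16 + c)
  unfold β α; linear_combination h

lemma sub_β_mul_add_α (hc : 0 ≤ c) (v : ℝ) : (v - β c) * (v + α c) = v * (v - 1/2) - c := by
  have h := α_mul_β hc
  unfold β at *
  linear_combination -h

def L (c v : ℝ) : ℝ := α c * log (v - β c) + β c * log (v + α c)

def R (c v : ℝ) : ℝ := exp (-L c v / (α c + β c)) / 2

lemma hasDerivAt_L (hc : 0 < c) {v : ℝ} (hv : β c < v) :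
    HasDerivAt (L c) ((α c + β c) * (v - 1/2) / ((v - β c) * (v + α c))) v := by
  have ha := α_pos hc
  have h₁ : v - β c ≠ 0 := by linarith
  have h₂ : v + α c ≠ 0 := by linarith [half_lt_β hc]
  have h := ((((hasDerivAt_id' v).sub_const (β c)).log h₁).const_mul (α c)).add
    ((((hasDerivAt_id' v).add_const (α c)).log h₂).const_mul (β c))
  rw [show (α c + β c) * (v - 1/2) / ((v - β c) * (v + α c)) =
    α c * (1 / (v - β c)) + β c * (1 / (v + α c)) by field_simp; unfold β; ring]
  exact h

lemma R_pos (c v : ℝ) : 0 < R c v := by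
  unfold R; positivity

lemma hasDerivAt_R (hc : 0 < c) {v : ℝ} (hv : β c < v) :
    HasDerivAt (R c) (-R c v * (v - 1/2) / ((v - β c) * (v + α c))) v := by
  have hab := (α_add_β_pos hc).ne'
  have h := (((hasDerivAt_L hc hv).neg.div_const (α c + β c)).exp).div_const 2
  rw [show -R c v * (v - 1/2) / ((v - β c) * (v + α c)) = exp (-L c v / (α c + β c)) *
    (-((α c + β c) * (v - 1/2) / ((v - β c) * (v + α c))) / (α c + β c)) / 2 by
      unfold R; field_simp]
  exact h

lemma strictAntiOn_R (hc : 0 < c) : StrictAntiOn (R c) (Ioi (β c)) := by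
  refine strictAntiOn_of_hasDerivWithinAt_neg (convex_Ioi _)
    (f' := fun v => -R c v * (v - 1/2) / ((v - β c) * (v + α c)))
    (fun v hv => (hasDerivAt_R hc hv).continuousAt.continuousWithinAt) (fun v hv => ?_)
    (fun v hv => ?_) <;> rw [interior_Ioi, mem_Ioi] at hv
  · exact (hasDerivAt_R hc hv).hasDerivWithinAt
  · have h₁ : 0 < v - β c := sub_pos.2 hv
    have h₂ : 0 < v + α c := by linarith [α_pos hc, half_lt_β hc]
    have h₃ : 0 < v - 1/2 := by linarith [half_lt_β hc]
    rw [neg_mul, neg_div, neg_lt_zero]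
    exact div_pos (mul_pos (R_pos c v) h₃) (mul_pos h₁ h₂)

lemma tendsto_R_atTop (hc : 0 < c) : Tendsto (R c) atTop (𝓝 0) := by
  have hL : Tendsto (L c) atTop atTop :=
    ((tendsto_log_atTop.comp (tendsto_atTop_add_const_right _ _ tendsto_id)).const_mul_atTop
      (α_pos hc)).atTop_add_atTop
      ((tendsto_log_atTop.comp (tendsto_atTop_add_const_right _ _ tendsto_id)).const_mul_atTop
        (by linarith [half_lt_β hc]))
  have h := ((tendsto_exp_atBot.comp ((tendsto_neg_atTop_atBot.comp hL).atBot_div_const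
    (α_add_β_pos hc))).div_const 2)
  simp only [Function.comp_def, zero_div] at h
  exact h

lemma tendsto_R_nhdsGT (hc : 0 < c) : Tendsto (R c) (𝓝[>] β c) atTop := by
  have hlog : Tendsto (fun v => log (v - β c)) (𝓝[>] β c) atBot := by
    refine tendsto_log_nhdsGT_zero.comp (tendsto_nhdsWithin_iff.2 ⟨?_, ?_⟩)
    · simpa using ((continuous_sub_right (β c)).tendsto (β c)).mono_left nhdsWithin_le_nhds
    · filter_upwards [self_mem_nhdsWithin] with v hv using sub_pos.2 (mem_Ioi.1 hv)
  have hcont : Tendsto (fun v => β c * log (v + α c)) (𝓝[>] β c)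
      (𝓝 (β c * log (β c + α c))) :=
    ((continuous_add_const (α c)).continuousAt.log (by linarith [α_pos hc, half_lt_β hc])
      |>.const_mul (β c)).continuousWithinAt
  have hL : Tendsto (L c) (𝓝[>] β c) atBot :=
    (hlog.const_mul_atBot (α_pos hc)).atBot_add hcont
  have h := (tendsto_exp_atTop.comp ((tendsto_neg_atBot_atTop.comp hL).atTop_div_const
    (α_add_β_pos hc))).atTop_div_const two_pos
  simp only [Function.comp_def] at h
  exact h

lemma tendsto_mul_R_atTop (hc : 0 < c) : Tendsto (fun v => v * R c v) atTop (𝓝 (1/2)) := by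
  have hab := (α_add_β_pos hc).ne'
  have hlog (a : ℝ) : Tendsto (fun v => log (1 + a / v)) atTop (𝓝 0) := by
    have h : Tendsto (fun v => 1 + a / v) atTop (𝓝 (1 + 0)) :=
      tendsto_const_nhds.add (tendsto_const_nhds.div_atTop tendsto_id)
    rw [add_zero] at h
    exact log_one ▸ (continuousAt_log one_ne_zero).tendsto.comp h
  have h := ((((hlog (-β c)).const_mul (α c)).add ((hlog (α c)).const_mul (β c))).neg.div_const
    (α c + β c)).rexp.div_const 2
  simp only [mul_zero, add_zero, neg_zero, zero_div, exp_zero] at h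
  refine h.congr' ?_
  filter_upwards [eventually_gt_atTop (β c)] with v hv
  have hv₀ : 0 < v := by linarith [half_lt_β hc]
  have h₁ : 1 + -β c / v = (v - β c) / v := by field_simp; ring
  have h₂ : 1 + α c / v = (v + α c) / v := by field_simp
  rw [h₁, h₂, log_div (by linarith) hv₀.ne', log_div (by linarith [α_pos hc]) hv₀.ne', R,
    ← mul_div_assoc, ← exp_log hv₀, ← exp_add, exp_log hv₀]
  congr 2
  unfold L; field_simp; ring

lemma surjOn_R (hc : 0 < c) : SurjOn (R c) (Ioi (β c)) (Ioi 0) := by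
  intro r (hr : 0 < r)
  obtain ⟨v₁, hrv₁, hv₁⟩ :=
    (((tendsto_R_nhdsGT hc).eventually_gt_atTop r).and self_mem_nhdsWithin).exists
  obtain ⟨v₂, hrv₂, hv₁₂⟩ :=
    (((tendsto_R_atTop hc).eventually_lt_const hr).and (eventually_ge_atTop v₁)).exists
  have hcont : ContinuousOn (R c) (Icc v₁ v₂) := fun v hv =>
    (hasDerivAt_R hc (lt_of_lt_of_le hv₁ hv.1)).continuousAt.continuousWithinAt
  obtain ⟨v, hv, hvr⟩ := intermediate_value_Icc' hv₁₂ hcont ⟨hrv₂.le, hrv₁.le⟩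
  exact ⟨v, lt_of_lt_of_le hv₁ hv.1, hvr⟩

def V (c : ℝ) : ℝ → ℝ := invFunOn (R c) (Ioi (β c))

lemma β_lt_V (hc : 0 < c) {r : ℝ} (hr : 0 < r) : β c < V c r :=
  invFunOn_mem (surjOn_R hc hr)

lemma R_V (hc : 0 < c) {r : ℝ} (hr : 0 < r) : R c (V c r) = r :=
  invFunOn_eq (surjOn_R hc hr)

lemma V_R (hc : 0 < c) {v : ℝ} (hv : β c < v) : V c (R c v) = v :=
  (strictAntiOn_R hc).injOn.leftInvOn_invFunOn hv

lemma lt_V_iff (hc : 0 < c) {r v : ℝ} (hr : 0 < r) (hv : β c < v) : v < V c r ↔ r < R c v := by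
  rw [← (strictAntiOn_R hc).lt_iff_gt (β_lt_V hc hr) hv, R_V hc hr]

lemma strictAntiOn_V (hc : 0 < c) : StrictAntiOn (V c) (Ioi 0) := fun r hr s hs hrs =>
  (lt_V_iff hc hr (β_lt_V hc hs)).2 (by rwa [R_V hc hs])

lemma continuousAt_V (hc : 0 < c) {r : ℝ} (hr : 0 < r) : ContinuousAt (V c) r := by
  have h : ContinuousAt (-V c) r := by
    refine continuousAt_of_monotoneOn_of_image_mem_nhds (strictAntiOn_V hc).neg.monotoneOn
      (Ioi_mem_nhds hr) (mem_of_superset (Iio_mem_nhds (neg_lt_neg (β_lt_V hc hr))) ?_)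
    intro w (hw : w < -β c)
    exact ⟨R c (-w), R_pos c (-w), by simp [V_R hc (lt_neg_of_lt_neg hw)]⟩
  simpa only [neg_neg] using h.neg

lemma tendsto_V_nhdsGT_zero (hc : 0 < c) : Tendsto (V c) (𝓝[>] 0) atTop := by
  refine tendsto_atTop.2 fun M => ?_
  have hM : β c < max M (β c + 1) := lt_max_of_lt_right (lt_add_one _)
  filter_upwards [Ioo_mem_nhdsGT (R_pos c (max M (β c + 1)))] with r hr
  exact le_max_left _ _ |>.trans ((lt_V_iff hc hr.1 hM).2 hr.2).le

lemma hasDerivAt_V (hc : 0 < c) {r : ℝ} (hr : 0 < r) :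
    HasDerivAt (V c) (-((V c r - β c) * (V c r + α c)) / (r * (V c r - 1/2))) r := by
  have hV := β_lt_V hc hr
  have h₁ : 0 < V c r - β c := sub_pos.2 hV
  have h₂ : 0 < V c r + α c := by linarith [α_pos hc, half_lt_β hc]
  have h₃ : 0 < V c r - 1/2 := by linarith [half_lt_β hc]
  have hR := hasDerivAt_R hc hV
  rw [R_V hc hr] at hR
  have h := hR.of_local_left_inverse (continuousAt_V hc hr)
    (div_ne_zero (by nlinarith) (by positivity))
    (eventually_gt_nhds hr |>.mono fun s hs => R_V hc hs)
  rwa [show (-r * (V c r - 1/2) / ((V c r - β c) * (V c r + α c)))⁻¹ =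
    -((V c r - β c) * (V c r + α c)) / (r * (V c r - 1/2)) by field_simp] at h

def solution (c r : ℝ) : ℝ := if r ≤ 0 then 1/2 else r * V c r

lemma solution_zero : solution c 0 = 1/2 := if_pos le_rfl

lemma solution_of_pos {r : ℝ} (hr : 0 < r) : solution c r = r * V c r := if_neg hr.not_ge

lemma β_mul_lt_solution (hc : 0 < c) {r : ℝ} (hr : 0 ≤ r) : β c * r < solution c r := by
  rcases hr.eq_or_lt with rfl | hr
  · simp [solution_zero]
  · rw [solution_of_pos hr, mul_comm]
    exact mul_lt_mul_of_pos_left (β_lt_V hc hr) hr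

lemma div_V_sub_half_eq {r : ℝ} (hr : 0 < r) :
    c / (V c r - 1/2) = c * r / (solution c r - r/2) := by
  rw [solution_of_pos hr, show r * V c r - r/2 = r * (V c r - 1/2) by ring, mul_comm c r,
    mul_div_mul_left _ _ hr.ne']

lemma hasDerivAt_solution (hc : 0 < c) {r : ℝ} (hr : 0 < r) :
    HasDerivAt (solution c) (c / (V c r - 1/2)) r := by
  have h₃ : V c r - 1/2 ≠ 0 := by linarith [β_lt_V hc hr, half_lt_β hc]
  have h := (hasDerivAt_id' r).mul (hasDerivAt_V hc hr)
  rw [show 1 * V c r + r * (-((V c r - β c) * (V c r + α c)) / (r * (V c r - 1/2))) =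
    c / (V c r - 1/2) by
      rw [sub_β_mul_add_α hc.le, ← mul_div_assoc, mul_div_mul_left _ _ hr.ne', one_mul,
        eq_div_iff h₃, add_mul, div_mul_cancel₀ _ h₃]
      ring] at h
  exact h.congr_of_eventuallyEq (eventually_gt_nhds hr |>.mono fun s hs => solution_of_pos hs)

lemma tendsto_solution_nhdsGT_zero (hc : 0 < c) : Tendsto (solution c) (𝓝[>] 0) (𝓝 (1/2)) := by
  refine ((tendsto_mul_R_atTop hc).comp (tendsto_V_nhdsGT_zero hc)).congr' ?_
  filter_upwards [self_mem_nhdsWithin] with r (hr : 0 < r)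
  rw [comp_apply, R_V hc hr, solution_of_pos hr, mul_comm]

lemma continuousOn_solution (hc : 0 < c) : ContinuousOn (solution c) (Ici 0) := by
  intro r (hr : 0 ≤ r)
  rcases hr.eq_or_lt with rfl | hr
  · rw [← continuousWithinAt_Ioi_iff_Ici, ContinuousWithinAt, solution_zero]
    exact tendsto_solution_nhdsGT_zero hc
  · exact (hasDerivAt_solution hc hr).continuousAt.continuousWithinAt

lemma hasDerivWithinAt_solution (hc : 0 < c) {r : ℝ} (hr : 0 ≤ r) :
    HasDerivWithinAt (solution c) (c * r / (solution c r - r/2)) (Ici 0) r := by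
  rcases hr.eq_or_lt with rfl | hr
  · rw [mul_zero, zero_div]
    refine hasDerivWithinAt_Ici_of_tendsto_deriv (s := Ioi 0)
      (fun x hx => (hasDerivAt_solution hc hx).differentiableAt.differentiableWithinAt)
      ((continuousOn_solution hc 0 (mem_Ici.2 le_rfl)).mono Ioi_subset_Ici_self)
      self_mem_nhdsWithin ?_
    have h : Tendsto (fun x => c / (V c x - 1/2)) (𝓝[>] 0) (𝓝 0) :=
      tendsto_const_nhds.div_atTop (tendsto_atTop_add_const_right _ _ (tendsto_V_nhdsGT_zero hc))
    refine h.congr' ?_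
    filter_upwards [self_mem_nhdsWithin] with x (hx : 0 < x)
    exact (hasDerivAt_solution hc hx).deriv.symm
  · rw [← div_V_sub_half_eq hr]
    exact (hasDerivAt_solution hc hr).hasDerivWithinAt

lemma monotoneOn_solution (hc : 0 < c) : MonotoneOn (solution c) (Ici 0) := by
  refine monotoneOn_of_hasDerivWithinAt_nonneg (convex_Ici 0) (continuousOn_solution hc)
    (f' := fun x => c / (V c x - 1/2)) (fun x hx => ?_) (fun x hx => ?_) <;>
    rw [interior_Ici, mem_Ioi] at hx
  · exact (hasDerivAt_solution hc hx).hasDerivWithinAt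
  · exact div_nonneg hc.le (by linarith [β_lt_V hc hx, half_lt_β hc])

def secondDeriv (c r : ℝ) : ℝ := c * (V c r - β c) * (V c r + α c) / (r * (V c r - 1/2) ^ 3)

lemma secondDeriv_pos (hc : 0 < c) {r : ℝ} (hr : 0 < r) : 0 < secondDeriv c r := by
  have h₁ : 0 < V c r - β c := sub_pos.2 (β_lt_V hc hr)
  have h₂ : 0 < V c r + α c := by linarith [α_pos hc, half_lt_β hc]
  have h₃ : 0 < V c r - 1/2 := by linarith [half_lt_β hc]
  unfold secondDeriv; positivity

lemma continuousAt_secondDeriv (hc : 0 < c) {r : ℝ} (hr : 0 < r) :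
    ContinuousAt (secondDeriv c) r := by
  have hV := continuousAt_V hc hr
  have h₃ : V c r - 1/2 ≠ 0 := by linarith [β_lt_V hc hr, half_lt_β hc]
  exact ((continuousAt_const.mul (hV.sub continuousAt_const)).mul
    (hV.add continuousAt_const)).div (continuousAt_id.mul ((hV.sub continuousAt_const).pow 3))
    (mul_ne_zero hr.ne' (pow_ne_zero 3 h₃))

lemma hasDerivAt_secondDeriv (hc : 0 < c) {r : ℝ} (hr : 0 < r) :
    HasDerivAt (fun s => c * s / (solution c s - s/2)) (secondDeriv c r) r := by
  have h₃ : V c r - 1/2 ≠ 0 := by linarith [β_lt_V hc hr, half_lt_β hc]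
  have h := (hasDerivAt_const r c).div ((hasDerivAt_V hc hr).sub_const (1/2)) h₃
  rw [show (0 * (V c r - 1/2) - c * (-((V c r - β c) * (V c r + α c)) / (r * (V c r - 1/2)))) /
    (V c r - 1/2) ^ 2 = secondDeriv c r by unfold secondDeriv; field_simp; ring] at h
  exact h.congr_of_eventuallyEq
    (eventually_gt_nhds hr |>.mono fun s hs => (div_V_sub_half_eq hs).symm)

def firstIntegral (c r y : ℝ) : ℝ := α c * log (y - β c * r) + β c * log (y + α c * r)

lemma firstIntegral_solution (hc : 0 < c) {r : ℝ} (hr : 0 ≤ r) :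
    firstIntegral c r (solution c r) = -(α c + β c) * log 2 := by
  rcases hr.eq_or_lt with rfl | hr
  · simp only [firstIntegral, solution_zero, mul_zero, sub_zero, add_zero, one_div, log_inv]
    ring
  · have hV := β_lt_V hc hr
    have hlog : log r = -L c (V c r) / (α c + β c) - log 2 := by
      conv_lhs => rw [← R_V hc hr]
      rw [R, log_div (exp_pos _).ne' two_ne_zero, log_exp]
    rw [firstIntegral, solution_of_pos hr, show r * V c r - β c * r = r * (V c r - β c) by ring,
      show r * V c r + α c * r = r * (V c r + α c) by ring,
      log_mul hr.ne' (by linarith), log_mul hr.ne' (by linarith [α_pos hc, half_lt_β hc]), hlog]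
    have hab := (α_add_β_pos hc).ne'
    unfold L; field_simp; ring

lemma strictMonoOn_firstIntegral (hc : 0 < c) {r : ℝ} (hr : 0 ≤ r) :
    StrictMonoOn (firstIntegral c r) (Ioi (β c * r)) := by
  intro y (hy : β c * r < y) z (hz : β c * r < z) hyz
  have hβ := half_lt_β hc
  have hα := α_pos hc
  have : 0 ≤ α c * r := mul_nonneg hα.le hr
  have : 0 ≤ β c * r := mul_nonneg (by linarith) hr
  unfold firstIntegral
  gcongr; linarith

lemma hasDerivWithinAt_firstIntegral_comp (hc : 0 < c) {g : ℝ → ℝ} {t : Set ℝ} {s : ℝ}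
    (hs : 0 ≤ s) (hgs : β c * s < g s) (hg : HasDerivWithinAt g (c * s / (g s - s/2)) t s) :
    HasDerivWithinAt (fun r => firstIntegral c r (g r)) 0 t s := by
  have hβ := half_lt_β hc
  have hα := α_pos hc
  have h₁ : g s - β c * s ≠ 0 := (sub_pos.2 hgs).ne'
  have h₂ : g s + α c * s ≠ 0 := by nlinarith
  have h₃ : g s - s/2 ≠ 0 := by nlinarith
  have h := (((hg.sub ((hasDerivWithinAt_id s t).const_mul (β c))).log h₁).const_mul (α c)).add
    (((hg.add ((hasDerivWithinAt_id s t).const_mul (α c))).log h₂).const_mul (β c))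
  have hd : c * s / (g s - s/2) * (g s - s/2) = c * s := div_mul_cancel₀ _ h₃
  generalize c * s / (g s - s/2) = d at h hd
  refine h.congr_deriv ?_
  simp only [Pi.sub_apply, Pi.add_apply, id]
  field_simp
  have hβα : β c = α c + 1/2 := rfl
  linear_combination (α c + β c) * hd - (α c + β c) * d * s * hβα - (α c + β c) * s * α_mul_β hc.le

lemma eventually_eq_solution_of_eq (hc : 0 < c) {g : ℝ → ℝ} {T x : ℝ}
    (hgd : ∀ r ∈ Ico 0 T, HasDerivWithinAt g (c * r / (g r - r/2)) (Icc 0 T) r)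
    (hx : x ∈ Ico 0 T) (hgx : g x = solution c x) : ∀ᶠ r in 𝓝[>] x, g r = solution c r := by
  have hcont : ContinuousWithinAt (fun r => g r - β c * r) (Ici x) x :=
    ((hgd x hx).continuousWithinAt.mono_of_mem_nhdsWithin (Icc_mem_nhdsGE_of_mem hx)).sub
      (by fun_prop)
  have hnear : ∀ᶠ r in 𝓝[≥] x, β c * r < g r ∧ r < T :=
    (hcont.eventually_const_lt (sub_pos.2 (hgx ▸ β_mul_lt_solution hc hx.1))).mono
      (fun r hr => sub_pos.1 hr) |>.and (eventually_nhdsWithin_of_eventually_nhds (eventually_lt_nhds hx.2))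
  obtain ⟨u, hxu, hsub⟩ := mem_nhdsGE_iff_exists_Icc_subset.1 hnear
  have hmem {r : ℝ} (hr : r ∈ Icc x u) : r ∈ Ico 0 T := ⟨hx.1.trans hr.1, (hsub hr).2⟩
  have hΦ {r : ℝ} (hr : r ∈ Icc x u) :
      HasDerivWithinAt (fun r => firstIntegral c r (g r)) 0 (Icc 0 T) r :=
    hasDerivWithinAt_firstIntegral_comp hc (hmem hr).1 (hsub hr).1 (hgd r (hmem hr))
  have hconst := constant_of_has_deriv_right_zero
    (fun r hr => (hΦ hr).continuousWithinAt.mono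
      (Icc_subset_Icc hx.1 (hmem ⟨hxu.le, le_rfl⟩).2.le))
    (fun r hr => (hΦ (Ico_subset_Icc_self hr)).mono_of_mem_nhdsWithin
      (Icc_mem_nhdsGE_of_mem (hmem (Ico_subset_Icc_self hr))))
  filter_upwards [Ioo_mem_nhdsGT hxu] with r hr
  have hr' : r ∈ Icc x u := Ioo_subset_Icc_self hr
  refine (strictMonoOn_firstIntegral hc (hmem hr').1).injOn (hsub hr').1
    (β_mul_lt_solution hc (hmem hr').1) ?_
  rw [hconst r hr', hgx, firstIntegral_solution hc hx.1, firstIntegral_solution hc (hmem hr').1]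

lemma solution_eqOn_of_ode (hc : 0 < c) {g : ℝ → ℝ} {T : ℝ} (hgc : ContinuousOn g (Icc 0 T))
    (hg0 : g 0 = 1/2)
    (hgd : ∀ r ∈ Ico 0 T, HasDerivWithinAt g (c * r / (g r - r/2)) (Icc 0 T) r) :
    EqOn (solution c) g (Icc 0 T) := by
  have hclosed : IsClosed ({r | g r = solution c r} ∩ Icc 0 T) := by
    have := (hgc.sub ((continuousOn_solution hc).mono Icc_subset_Ici_self))
      |>.preimage_isClosed_of_isClosed isClosed_Icc (isClosed_singleton (x := 0))
    simpa [inter_comm, sub_eq_zero, preimage] using this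
  intro r hr
  exact (hclosed.Icc_subset_of_forall_mem_nhdsWithin (by simp [hg0, solution_zero])
    (fun x hx => eventually_eq_solution_of_eq hc hgd hx.2 hx.1) hr).symm

end HomogeneousODE

end

open HomogeneousODE in
theorem stmt12 (c : ℝ) (hc : 0 ≤ c) :
    ∃ f : ℝ → ℝ,
      (ContinuousOn f (Set.Icc 0 1) ∧ f 0 = 1/2 ∧
        ∀ r ∈ Set.Ico (0:ℝ) 1,
          HasDerivWithinAt f (c * r / (f r - r/2)) (Set.Icc 0 1) r) ∧
      (∀ g : ℝ → ℝ,
        (ContinuousOn g (Set.Icc 0 1) ∧ g 0 = 1/2 ∧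
          ∀ r ∈ Set.Ico (0:ℝ) 1,
            HasDerivWithinAt g (c * r / (g r - r/2)) (Set.Icc 0 1) r) →
        Set.EqOn f g (Set.Icc 0 1)) ∧
      MonotoneOn f (Set.Icc 0 1) ∧
      (0 < c → ∃ f'' : ℝ → ℝ,
        ContinuousOn f'' (Set.Ioc 0 1) ∧
        (∀ r ∈ Set.Ioc (0:ℝ) 1,
          HasDerivWithinAt (fun s => c * s / (f s - s/2)) (f'' r) (Set.Ioc 0 1) r) ∧
        ∀ r ∈ Set.Ioc (0:ℝ) 1, 0 < f'' r) := by
  rcases hc.eq_or_lt with rfl | hc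
  · refine ⟨fun _ => 1/2, ⟨continuousOn_const, rfl, fun r _ => ?_⟩, ?_, monotoneOn_const,
      fun h => absurd h (lt_irrefl 0)⟩
    · simpa using hasDerivWithinAt_const r (Icc 0 1) (1/2 : ℝ)
    · rintro g ⟨hgc, hg0, hgd⟩ r hr
      have hconst := constant_of_has_deriv_right_zero hgc fun s hs => by
        simpa using (hgd s hs).mono_of_mem_nhdsWithin (Icc_mem_nhdsGE_of_mem hs)
      rw [hconst r hr, hg0]
  · refine ⟨solution c, ⟨(continuousOn_solution hc).mono Icc_subset_Ici_self, solution_zero,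
      fun r hr => (hasDerivWithinAt_solution hc hr.1).mono Icc_subset_Ici_self⟩,
      fun g ⟨hgc, hg0, hgd⟩ => solution_eqOn_of_ode hc hgc hg0 hgd,
      (monotoneOn_solution hc).mono Icc_subset_Ici_self, fun _ => ⟨secondDeriv c, ?_, ?_, ?_⟩⟩
    · exact fun r hr => (continuousAt_secondDeriv hc hr.1).continuousWithinAt
    · exact fun r hr => (hasDerivAt_secondDeriv hc hr.1).hasDerivWithinAt
    · exact fun r hr => secondDeriv_pos hc hr.1
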